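/- arXiv:1304.1044 — 5 statements merged into one kernel-verified Lean document; each statement's English description precedes it below -/
import Mathlib

section
/- The relation ≼ is a partial order on [0,1]: it is reflexive (s ≼ s for every s), antisymmetric (s ≼ t and t ≼ s imply s = t), and transitive (s ≼ t and t ≼ u imply s ≼ u). -/
open Set Filter

/-- The infimum `I_s^t` of `f` over the interval `[s, t]`. -/
noncomputable def infIcc (f : ℝ → ℝ) (s t : ℝ) : ℝ := sInf (f '' Set.Icc s t)

/-- The genealogical relation `s ≼ t` associated with the excursion-type function `f`,
where `fl` is the left-limit function of `f` (with the convention `fl 0 = 0`):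
`s ≼ t ↔ s ≤ t ∧ f(s-) ≤ I_s^t`. -/
def Prec (f fl : ℝ → ℝ) (s t : ℝ) : Prop := s ≤ t ∧ fl s ≤ infIcc f s t

/-- The jump `Δ_t = f(t) - f(t-)` of `f` at `t` (with the convention `fl 0 = 0`
this gives `Δ_0 = 0` for `f 0 = 0`). -/
def jump (f fl : ℝ → ℝ) (t : ℝ) : ℝ := f t - fl t

/-- The position `x_s^t = I_s^t - f(s-)` of the ancestral line of `t` in the loop at `s`. -/
noncomputable def xpos (f fl : ℝ → ℝ) (s t : ℝ) : ℝ := infIcc f s t - fl s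

/-- Distance on the cycle of length `D`: `δ_D(a,b) = min (|a-b|, D - |a-b|)`. -/
def cycleDist (D a b : ℝ) : ℝ := min |a - b| (D - |a - b|)

/-- `d₀(s,t) = ∑_{s ≺ r ≼ t} δ_{Δ_r}(0, x_r^t)`. -/
noncomputable def dZero (f fl : ℝ → ℝ) (s t : ℝ) : ℝ :=
  ∑' r : {r : ℝ // Prec f fl s r ∧ s ≠ r ∧ Prec f fl r t},
    cycleDist (jump f fl r.1) 0 (xpos f fl r.1 t)

/-- The most recent common ancestor `s ∧ t` of `s` and `t`: the greatest common
`≼`-lower bound of `s` and `t` in `[0,1]`, realized as the supremum of the set of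
common lower bounds. -/
noncomputable def mca (f fl : ℝ → ℝ) (s t : ℝ) : ℝ :=
  sSup {r : ℝ | r ∈ Set.Icc (0:ℝ) 1 ∧ Prec f fl r s ∧ Prec f fl r t}

/-- The looptree pseudo-distance
`d(s,t) = δ_{Δ_{s∧t}}(x_{s∧t}^s, x_{s∧t}^t) + d₀(s∧t, s) + d₀(s∧t, t)`. -/
noncomputable def looptreeDist (f fl : ℝ → ℝ) (s t : ℝ) : ℝ :=
  cycleDist (jump f fl (mca f fl s t)) (xpos f fl (mca f fl s t) s) (xpos f fl (mca f fl s t) t)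
    + dZero f fl (mca f fl s t) s + dZero f fl (mca f fl s t) t

/-
The only nontrivial point is transitivity. For `s < t`, the left limit `f(t-)` is a limit of
values of `f` on `[s, t)`, so `f(s-) ≤ I_s^t ≤ f(t-)`; hence `f(s-)` bounds `f` from below
on both `[s, t]` and `[t, u]`, that is, on `[s, u]`.
-/

section infIcc

variable {f : ℝ → ℝ} {s t u c L : ℝ}

theorem infIcc_self (f : ℝ → ℝ) (s : ℝ) : infIcc f s s = f s := by
  rw [infIcc, Icc_self, image_singleton, csInf_singleton]

theorem infIcc_le (hb : BddBelow (f '' Icc s t)) {x : ℝ} (hx : x ∈ Icc s t) :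
    infIcc f s t ≤ f x :=
  csInf_le hb (mem_image_of_mem f hx)

theorem le_infIcc (hst : s ≤ t) (h : ∀ x ∈ Icc s t, c ≤ f x) : c ≤ infIcc f s t :=
  le_csInf ((nonempty_Icc.2 hst).image f) (forall_mem_image.2 h)

theorem le_infIcc_of_le_infIcc_of_le_infIcc (hst : s ≤ t) (htu : t ≤ u)
    (hb₁ : BddBelow (f '' Icc s t)) (hb₂ : BddBelow (f '' Icc t u))
    (h₁ : c ≤ infIcc f s t) (h₂ : c ≤ infIcc f t u) : c ≤ infIcc f s u := by
  refine le_infIcc (hst.trans htu) fun x hx => ?_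
  rcases le_total x t with hxt | htx
  · exact h₁.trans (infIcc_le hb₁ ⟨hx.1, hxt⟩)
  · exact h₂.trans (infIcc_le hb₂ ⟨htx, hx.2⟩)

theorem infIcc_le_of_tendsto_nhdsLT (hst : s < t) (hb : BddBelow (f '' Icc s t))
    (hL : Tendsto f (nhdsWithin t (Iio t)) (nhds L)) : infIcc f s t ≤ L := by
  refine ge_of_tendsto hL ?_
  filter_upwards [self_mem_nhdsWithin, Ioo_mem_nhdsLT hst] with x hxt hx
  exact infIcc_le hb ⟨hx.1.le, hxt.le⟩

end infIcc

section Prec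

variable {f fl : ℝ → ℝ} {s t u : ℝ}

theorem prec_refl (h : fl s ≤ f s) : Prec f fl s s :=
  ⟨le_rfl, (infIcc_self f s).symm ▸ h⟩

theorem Prec.antisymm (hst : Prec f fl s t) (hts : Prec f fl t s) : s = t :=
  le_antisymm hst.1 hts.1

theorem Prec.left_lim_le_of_lt (hst : Prec f fl s t) (hlt : s < t)
    (hb : BddBelow (f '' Icc s t)) (hleft : Tendsto f (nhdsWithin t (Iio t)) (nhds (fl t))) :
    fl s ≤ fl t :=
  hst.2.trans (infIcc_le_of_tendsto_nhdsLT hlt hb hleft)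

theorem Prec.trans (hst : Prec f fl s t) (htu : Prec f fl t u) (hfl : fl s ≤ fl t)
    (hb₁ : BddBelow (f '' Icc s t)) (hb₂ : BddBelow (f '' Icc t u)) : Prec f fl s u :=
  ⟨hst.1.trans htu.1,
    le_infIcc_of_le_infIcc_of_le_infIcc hst.1 htu.1 hb₁ hb₂ hst.2 (hfl.trans htu.2)⟩

end Prec

theorem prec_isPartialOrder_general (f fl : ℝ → ℝ)
    (hf_left : ∀ t ∈ Set.Ioc (0:ℝ) 1, Filter.Tendsto f (nhdsWithin t (Set.Iio t)) (nhds (fl t)))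
    (hf_nonneg : ∀ t ∈ Set.Icc (0:ℝ) 1, 0 ≤ f t)
    (hf_jump : ∀ t ∈ Set.Icc (0:ℝ) 1, fl t ≤ f t) :
    (∀ s ∈ Set.Icc (0:ℝ) 1, Prec f fl s s) ∧
    (∀ s ∈ Set.Icc (0:ℝ) 1, ∀ t ∈ Set.Icc (0:ℝ) 1,
      Prec f fl s t → Prec f fl t s → s = t) ∧
    (∀ s ∈ Set.Icc (0:ℝ) 1, ∀ t ∈ Set.Icc (0:ℝ) 1, ∀ u ∈ Set.Icc (0:ℝ) 1,
      Prec f fl s t → Prec f fl t u → Prec f fl s u) := by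
  have bdd {a b : ℝ} (ha : 0 ≤ a) (hb : b ≤ 1) : BddBelow (f '' Icc a b) :=
    ⟨0, forall_mem_image.2 fun x hx => hf_nonneg x ⟨ha.trans hx.1, hx.2.trans hb⟩⟩
  refine ⟨fun s hs => prec_refl (hf_jump s hs), fun s _ t _ => Prec.antisymm,
    fun s hs t ht u hu hst htu => ?_⟩
  have hfl : fl s ≤ fl t := by
    rcases hst.1.eq_or_lt with rfl | hlt
    · exact le_rfl
    · exact hst.left_lim_le_of_lt hlt (bdd hs.1 ht.2) (hf_left t ⟨hs.1.trans_lt hlt, ht.2⟩)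
  exact hst.trans htu hfl (bdd hs.1 ht.2) (bdd ht.1 hu.2)

/-- the relation ≼ is a partial order on [0,1]: reflexive, antisymmetric
and transitive. -/
theorem prec_isPartialOrder (f fl : ℝ → ℝ)
    (hf_right : ∀ t ∈ Set.Ico (0:ℝ) 1, Filter.Tendsto f (nhdsWithin t (Set.Ici t)) (nhds (f t)))
    (hf_left : ∀ t ∈ Set.Ioc (0:ℝ) 1, Filter.Tendsto f (nhdsWithin t (Set.Iio t)) (nhds (fl t)))
    (hfl0 : fl 0 = 0)
    (hf_nonneg : ∀ t ∈ Set.Icc (0:ℝ) 1, 0 ≤ f t)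
    (hf_jump : ∀ t ∈ Set.Icc (0:ℝ) 1, fl t ≤ f t)
    (hf0 : f 0 = 0) (hf1 : f 1 = 0) :
    (∀ s ∈ Set.Icc (0:ℝ) 1, Prec f fl s s) ∧
    (∀ s ∈ Set.Icc (0:ℝ) 1, ∀ t ∈ Set.Icc (0:ℝ) 1,
      Prec f fl s t → Prec f fl t s → s = t) ∧
    (∀ s ∈ Set.Icc (0:ℝ) 1, ∀ t ∈ Set.Icc (0:ℝ) 1, ∀ u ∈ Set.Icc (0:ℝ) 1,
      Prec f fl s t → Prec f fl t u → Prec f fl s u) :=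
  prec_isPartialOrder_general f fl hf_left hf_nonneg hf_jump
end

section
/- For every t ∈ [0,1], the set of ≼-lower bounds of t is linearly ordered by ≼: if r ≼ t and r' ≼ t, then r ≼ r' or r' ≼ r. -/
open Set Filter

theorem infIcc_le_infIcc_of_le {f : ℝ → ℝ} {s t t' : ℝ} (hbdd : BddBelow (f '' Icc s t'))
    (hst : s ≤ t) (htt' : t ≤ t') : infIcc f s t' ≤ infIcc f s t :=
  csInf_le_csInf hbdd ((nonempty_Icc.2 hst).image f) (image_mono (Icc_subset_Icc_right htt'))

theorem Prec.of_le_of_le {f fl : ℝ → ℝ} {s t u : ℝ} (h : Prec f fl s t)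
    (hbdd : BddBelow (f '' Icc s t)) (hsu : s ≤ u) (hut : u ≤ t) : Prec f fl s u :=
  ⟨hsu, h.2.trans (infIcc_le_infIcc_of_le hbdd hsu hut)⟩

theorem Prec.total_of_prec {f fl : ℝ → ℝ} {r r' t : ℝ} (hr : Prec f fl r t) (hr' : Prec f fl r' t)
    (hbdd : BddBelow (f '' Icc r t)) (hbdd' : BddBelow (f '' Icc r' t)) :
    Prec f fl r r' ∨ Prec f fl r' r := by
  rcases le_total r r' with h | h
  · exact .inl (hr.of_le_of_le hbdd h hr'.1)
  · exact .inr (hr'.of_le_of_le hbdd' h hr.1)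

theorem prec_lowerBounds_linear_general (f fl : ℝ → ℝ)
    (hf_nonneg : ∀ t ∈ Set.Icc (0:ℝ) 1, 0 ≤ f t) :
    ∀ t ∈ Set.Icc (0:ℝ) 1, ∀ r ∈ Set.Icc (0:ℝ) 1, ∀ r' ∈ Set.Icc (0:ℝ) 1,
      Prec f fl r t → Prec f fl r' t → Prec f fl r r' ∨ Prec f fl r' r := by
  intro t ht r hr r' hr' hrt hr't
  have hbdd : ∀ a ∈ Icc (0:ℝ) 1, BddBelow (f '' Icc a t) := fun a ha =>
    ⟨0, forall_mem_image.2 fun x hx => hf_nonneg x ⟨ha.1.trans hx.1, hx.2.trans ht.2⟩⟩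
  exact hrt.total_of_prec hr't (hbdd r hr) (hbdd r' hr')

/-- for every t ∈ [0,1], the set of ≼-lower bounds of t is linearly
ordered by ≼. -/
theorem prec_lowerBounds_linear (f fl : ℝ → ℝ)
    (hf_right : ∀ t ∈ Set.Ico (0:ℝ) 1, Filter.Tendsto f (nhdsWithin t (Set.Ici t)) (nhds (f t)))
    (hf_left : ∀ t ∈ Set.Ioc (0:ℝ) 1, Filter.Tendsto f (nhdsWithin t (Set.Iio t)) (nhds (fl t)))
    (hfl0 : fl 0 = 0)
    (hf_nonneg : ∀ t ∈ Set.Icc (0:ℝ) 1, 0 ≤ f t)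
    (hf_jump : ∀ t ∈ Set.Icc (0:ℝ) 1, fl t ≤ f t)
    (hf0 : f 0 = 0) (hf1 : f 1 = 0) :
    ∀ t ∈ Set.Icc (0:ℝ) 1, ∀ r ∈ Set.Icc (0:ℝ) 1, ∀ r' ∈ Set.Icc (0:ℝ) 1,
      Prec f fl r t → Prec f fl r' t → Prec f fl r r' ∨ Prec f fl r' r :=
  prec_lowerBounds_linear_general f fl hf_nonneg
end

section
/- For all s, t ∈ [0,1], the set A = {r ∈ [0,1] : r ≼ s and r ≼ t} of common ≼-lower bounds of s and t is nonempty (it contains 0) and has a greatest element with respect to ≼ (equivalently, with respect to ≤); i.e. the supremum m = sup A satisfies m ∈ A, and every r ∈ A satisfies r ≼ m. This greatest element is the most recent common ancestor s∧t of s and t. -/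
open Set Filter

open Topology

/-! Let `m` be the supremum of the common ancestors of `s` and `t`. Each ancestor `r ≤ m` of `s`
satisfies `f(r-) ≤ I_r^s ≤ I_m^s`. If `m` is not itself an ancestor, such `r` accumulate at `m`
from the left, and left limits of `f` at points `r ↑ m` converge to `f(m-)`, so
`f(m-) ≤ I_m^s`. -/

theorem Filter.Tendsto.leftLim_tendsto {α β : Type*} [TopologicalSpace α] [LinearOrder α]
    [OrderTopology α] [DenselyOrdered α] [NoMinOrder α] [TopologicalSpace β]
    [RegularSpace β] {f g : α → β} {m : α} {L : β}
    (hL : Tendsto f (𝓝[<] m) (𝓝 L)) (hg : ∀ᶠ r in 𝓝[<] m, Tendsto f (𝓝[<] r) (𝓝 (g r))) :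
    Tendsto g (𝓝[<] m) (𝓝 L) := by
  rw [(closed_nhds_basis L).tendsto_right_iff]
  rintro V ⟨hV, hV_closed⟩
  filter_upwards [hg, eventually_eventually_nhdsWithin.2 (hL hV), self_mem_nhdsWithin]
    with r hr hfV hrm
  exact hV_closed.mem_of_tendsto hr
    (hfV.filter_mono (nhdsWithin_mono _ (Iio_subset_Iio (le_of_lt hrm))))

theorem infIcc_le_infIcc {f : ℝ → ℝ} {a b c d : ℝ} (hbdd : BddBelow (f '' Icc a d))
    (hab : a ≤ b) (hbc : b ≤ c) (hcd : c ≤ d) : infIcc f a d ≤ infIcc f b c :=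
  csInf_le_csInf hbdd ((nonempty_Icc.2 hbc).image f) (image_mono (Icc_subset_Icc hab hcd))

theorem Prec.of_mem_Icc {f fl : ℝ → ℝ} {r s m : ℝ} (h : Prec f fl r s) (hm : m ∈ Icc r s)
    (hbdd : BddBelow (f '' Icc r s)) : Prec f fl r m :=
  ⟨hm.1, h.2.trans (infIcc_le_infIcc hbdd le_rfl hm.1 hm.2)⟩

theorem prec_zero_left {f fl : ℝ → ℝ} (hfl0 : fl 0 = 0)
    (hf_nonneg : ∀ t ∈ Icc (0:ℝ) 1, 0 ≤ f t) {s : ℝ} (hs : s ∈ Icc (0:ℝ) 1) : Prec f fl 0 s := by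
  refine ⟨hs.1, hfl0.symm ▸ le_csInf ((nonempty_Icc.2 hs.1).image f) ?_⟩
  rintro _ ⟨x, hx, rfl⟩
  exact hf_nonneg x ⟨hx.1, hx.2.trans hs.2⟩

theorem csSup_mem_Icc_of_subset {A : Set ℝ} {a b : ℝ} (hA : A ⊆ Icc a b) (hne : A.Nonempty) :
    sSup A ∈ Icc a b := by
  obtain ⟨r, hr⟩ := hne
  exact ⟨(hA hr).1.trans (le_csSup ⟨b, fun x hx => (hA hx).2⟩ hr),
    csSup_le ⟨r, hr⟩ fun x hx => (hA hx).2⟩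

theorem prec_sSup {f fl : ℝ → ℝ}
    (hf_left : ∀ t ∈ Ioc (0:ℝ) 1, Tendsto f (𝓝[<] t) (𝓝 (fl t)))
    (hbdd : BddBelow (f '' Icc 0 1)) {A : Set ℝ} (hA : A ⊆ Icc 0 1) (hne : A.Nonempty)
    {s : ℝ} (hs : s ≤ 1) (hAs : ∀ r ∈ A, Prec f fl r s) : Prec f fl (sSup A) s := by
  set m := sSup A
  have hms : m ≤ s := csSup_le hne fun r hr => (hAs r hr).1
  by_cases hmA : m ∈ A
  · exact hAs m hmA
  have hlub : IsLUB A m := isLUB_csSup hne ⟨1, fun r hr => (hA hr).2⟩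
  have hA_lt : A ⊆ Iio m := fun r hr => (hlub.1 hr).lt_of_ne fun h => hmA (h ▸ hr)
  obtain ⟨a, ha⟩ := hne
  have hm : m ∈ Ioc 0 1 := ⟨(hA ha).1.trans_lt (hA_lt ha), (csSup_mem_Icc_of_subset hA ⟨a, ha⟩).2⟩
  have hfl : Tendsto fl (𝓝[<] m) (𝓝 (fl m)) :=
    (hf_left m hm).leftLim_tendsto <| eventually_of_mem (Ioo_mem_nhdsLT hm.1)
      fun r hr => hf_left r ⟨hr.1, hr.2.le.trans hm.2⟩
  have : (𝓝[A] m).NeBot := mem_closure_iff_nhdsWithin_neBot.1 (hlub.mem_closure ⟨a, ha⟩)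
  refine ⟨hms, le_of_tendsto (hfl.mono_left (nhdsWithin_mono _ hA_lt)) ?_⟩
  refine eventually_nhdsWithin_of_forall fun r hr => (hAs r hr).2.trans ?_
  exact infIcc_le_infIcc (hbdd.mono (image_mono (Icc_subset_Icc (hA hr).1 hs)))
    (hA_lt hr).le hms le_rfl

theorem exists_mostRecentCommonAncestor_general (f fl : ℝ → ℝ)
    (hf_left : ∀ t ∈ Set.Ioc (0:ℝ) 1, Filter.Tendsto f (nhdsWithin t (Set.Iio t)) (nhds (fl t)))
    (hfl0 : fl 0 = 0)
    (hf_nonneg : ∀ t ∈ Set.Icc (0:ℝ) 1, 0 ≤ f t)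
    (s t : ℝ) (hs : s ∈ Set.Icc (0:ℝ) 1) (ht : t ∈ Set.Icc (0:ℝ) 1) :
    (0:ℝ) ∈ {r : ℝ | r ∈ Set.Icc (0:ℝ) 1 ∧ Prec f fl r s ∧ Prec f fl r t} ∧
    mca f fl s t ∈ {r : ℝ | r ∈ Set.Icc (0:ℝ) 1 ∧ Prec f fl r s ∧ Prec f fl r t} ∧
    ∀ r ∈ {r : ℝ | r ∈ Set.Icc (0:ℝ) 1 ∧ Prec f fl r s ∧ Prec f fl r t},
      Prec f fl r (mca f fl s t) := by
  set A := {r : ℝ | r ∈ Icc (0:ℝ) 1 ∧ Prec f fl r s ∧ Prec f fl r t}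
  have hbdd : BddBelow (f '' Icc 0 1) := ⟨0, forall_mem_image.2 hf_nonneg⟩
  have hA : A ⊆ Icc 0 1 := fun r hr => hr.1
  have h0A : (0:ℝ) ∈ A :=
    ⟨left_mem_Icc.2 zero_le_one, prec_zero_left hfl0 hf_nonneg hs, prec_zero_left hfl0 hf_nonneg ht⟩
  have hmA : mca f fl s t ∈ A :=
    ⟨csSup_mem_Icc_of_subset hA ⟨0, h0A⟩,
      prec_sSup hf_left hbdd hA ⟨0, h0A⟩ hs.2 fun r hr => hr.2.1,
      prec_sSup hf_left hbdd hA ⟨0, h0A⟩ ht.2 fun r hr => hr.2.2⟩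
  refine ⟨h0A, hmA, fun r hr => hr.2.1.of_mem_Icc ⟨le_csSup ⟨1, fun x hx => (hA hx).2⟩ hr,
    hmA.2.1.1⟩ (hbdd.mono (image_mono (Icc_subset_Icc (hA hr).1 hs.2)))⟩

/-- for all s, t ∈ [0,1], the set of common ≼-lower bounds of s and t
contains 0, and its supremum is a greatest element of it with respect to ≼. -/
theorem exists_mostRecentCommonAncestor (f fl : ℝ → ℝ)
    (hf_right : ∀ t ∈ Set.Ico (0:ℝ) 1, Filter.Tendsto f (nhdsWithin t (Set.Ici t)) (nhds (f t)))
    (hf_left : ∀ t ∈ Set.Ioc (0:ℝ) 1, Filter.Tendsto f (nhdsWithin t (Set.Iio t)) (nhds (fl t)))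
    (hfl0 : fl 0 = 0)
    (hf_nonneg : ∀ t ∈ Set.Icc (0:ℝ) 1, 0 ≤ f t)
    (hf_jump : ∀ t ∈ Set.Icc (0:ℝ) 1, fl t ≤ f t)
    (hf0 : f 0 = 0) (hf1 : f 1 = 0)
    (s t : ℝ) (hs : s ∈ Set.Icc (0:ℝ) 1) (ht : t ∈ Set.Icc (0:ℝ) 1) :
    (0:ℝ) ∈ {r : ℝ | r ∈ Set.Icc (0:ℝ) 1 ∧ Prec f fl r s ∧ Prec f fl r t} ∧
    mca f fl s t ∈ {r : ℝ | r ∈ Set.Icc (0:ℝ) 1 ∧ Prec f fl r s ∧ Prec f fl r t} ∧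
    ∀ r ∈ {r : ℝ | r ∈ Set.Icc (0:ℝ) 1 ∧ Prec f fl r s ∧ Prec f fl r t},
      Prec f fl r (mca f fl s t) :=
  exists_mostRecentCommonAncestor_general f fl hf_left hfl0 hf_nonneg s t hs ht
end

section
/- If s ≺ t, then d_0(s,t) ≤ f(t−) − I_s^t. -/
open Set Filter

section Aux

variable {f fl : ℝ → ℝ}

lemma bddBelow_image (hf_nonneg : ∀ t ∈ Set.Icc (0:ℝ) 1, 0 ≤ f t) {s t : ℝ}
    (h0 : 0 ≤ s) (h1 : t ≤ 1) : BddBelow (f '' Set.Icc s t) := by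
  refine ⟨0, ?_⟩
  rintro y ⟨u, hu, rfl⟩
  exact hf_nonneg u ⟨h0.trans hu.1, hu.2.trans h1⟩

lemma infIcc_le_apply (hf_nonneg : ∀ t ∈ Set.Icc (0:ℝ) 1, 0 ≤ f t) {s t u : ℝ}
    (h0 : 0 ≤ s) (h1 : t ≤ 1) (hu : u ∈ Set.Icc s t) : infIcc f s t ≤ f u :=
  csInf_le (bddBelow_image hf_nonneg h0 h1) ⟨u, hu, rfl⟩

lemma infIcc_le_fl
    (hf_left : ∀ t ∈ Set.Ioc (0:ℝ) 1, Filter.Tendsto f (nhdsWithin t (Set.Iio t)) (nhds (fl t)))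
    (hf_nonneg : ∀ t ∈ Set.Icc (0:ℝ) 1, 0 ≤ f t)
    {a r t : ℝ} (h0 : 0 ≤ a) (har : a < r) (hrt : r ≤ t) (ht1 : t ≤ 1) :
    infIcc f a t ≤ fl r := by
  have hr : r ∈ Set.Ioc (0:ℝ) 1 := ⟨h0.trans_lt har, hrt.trans ht1⟩
  refine ge_of_tendsto (hf_left r hr) ?_
  filter_upwards [Ioo_mem_nhdsLT_of_mem (show r ∈ Set.Ioc a r from ⟨har, le_rfl⟩)] with u hu
  exact infIcc_le_apply hf_nonneg h0 ht1 ⟨hu.1.le, hu.2.le.trans hrt⟩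

lemma sum_xpos_le
    (hf_left : ∀ t ∈ Set.Ioc (0:ℝ) 1, Filter.Tendsto f (nhdsWithin t (Set.Iio t)) (nhds (fl t)))
    (hf_nonneg : ∀ t ∈ Set.Icc (0:ℝ) 1, 0 ≤ f t)
    {s t : ℝ} (hs0 : 0 ≤ s) (ht1 : t ≤ 1) :
    ∀ (F : Finset {r : ℝ // Prec f fl s r ∧ s ≠ r ∧ Prec f fl r t}) (hne : F.Nonempty),
      ∑ r ∈ F, (infIcc f (r : ℝ) t - fl r) ≤ infIcc f ((F.max' hne : _) : ℝ) t - infIcc f s t := by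
  intro F
  induction F using Finset.strongInductionOn with
  | _ F ih =>
    intro hne
    set m := F.max' hne with hm
    have hmF : m ∈ F := F.max'_mem hne
    have hsm : s < (m : ℝ) := lt_of_le_of_ne m.2.1.1 m.2.2.1
    have hmt : (m : ℝ) ≤ t := m.2.2.2.1
    have hsum : ∑ r ∈ F, (infIcc f (r : ℝ) t - fl r)
        = (infIcc f (m : ℝ) t - fl m) + ∑ r ∈ F.erase m, (infIcc f (r : ℝ) t - fl r) :=
      (Finset.add_sum_erase F _ hmF).symm
    rcases (F.erase m).eq_empty_or_nonempty with he | hne'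
    · rw [hsum, he, Finset.sum_empty, add_zero]
      have h1 : infIcc f s t ≤ fl m := infIcc_le_fl hf_left hf_nonneg hs0 hsm hmt ht1
      linarith
    · have hsub : F.erase m ⊂ F := Finset.erase_ssubset hmF
      have h1 := ih _ hsub hne'
      set m' := (F.erase m).max' hne' with hm'
      have hm'F : m' ∈ F.erase m := (F.erase m).max'_mem hne'
      have hm'ne : m' ≠ m := (Finset.mem_erase.mp hm'F).1
      have hm'le : (m' : ℝ) ≤ (m : ℝ) := F.le_max' m' (Finset.mem_of_mem_erase hm'F)
      have hm'lt : (m' : ℝ) < (m : ℝ) :=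
        lt_of_le_of_ne hm'le (fun h => hm'ne (Subtype.ext h))
      have h0m' : 0 ≤ (m' : ℝ) := hs0.trans m'.2.1.1
      have h2 : infIcc f (m' : ℝ) t ≤ fl m :=
        infIcc_le_fl hf_left hf_nonneg h0m' hm'lt hmt ht1
      rw [hsum]
      linarith

end Aux

/-- if s ≺ t then d₀(s,t) ≤ f(t-) - I_s^t. -/
theorem dZero_le (f fl : ℝ → ℝ)
    (hf_right : ∀ t ∈ Set.Ico (0:ℝ) 1, Filter.Tendsto f (nhdsWithin t (Set.Ici t)) (nhds (f t)))
    (hf_left : ∀ t ∈ Set.Ioc (0:ℝ) 1, Filter.Tendsto f (nhdsWithin t (Set.Iio t)) (nhds (fl t)))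
    (hfl0 : fl 0 = 0)
    (hf_nonneg : ∀ t ∈ Set.Icc (0:ℝ) 1, 0 ≤ f t)
    (hf_jump : ∀ t ∈ Set.Icc (0:ℝ) 1, fl t ≤ f t)
    (hf0 : f 0 = 0) (hf1 : f 1 = 0)
    (s t : ℝ) (hs : s ∈ Set.Icc (0:ℝ) 1) (ht : t ∈ Set.Icc (0:ℝ) 1)
    (hst : Prec f fl s t) (hne : s ≠ t) :
    dZero f fl s t ≤ fl t - infIcc f s t := by
    classical
  have hs0 : 0 ≤ s := hs.1
  have ht1 : t ≤ 1 := ht.2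
  have hst' : s < t := lt_of_le_of_ne hst.1 hne
  have hIt : infIcc f s t ≤ fl t := infIcc_le_fl hf_left hf_nonneg hs0 hst' le_rfl ht1
  set g : {r : ℝ // Prec f fl s r ∧ s ≠ r ∧ Prec f fl r t} → ℝ :=
    fun r => if (r : ℝ) = t then 0 else infIcc f (r : ℝ) t - fl r with hg
  have hterm : ∀ r : {r : ℝ // Prec f fl s r ∧ s ≠ r ∧ Prec f fl r t},
      cycleDist (jump f fl r.1) 0 (xpos f fl r.1 t) ≤ g r := by
    intro r
    have h0r : 0 ≤ (r : ℝ) := hs0.trans r.2.1.1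
    have hrt : (r : ℝ) ≤ t := r.2.2.2.1
    have hx0 : 0 ≤ xpos f fl r.1 t := sub_nonneg.mpr r.2.2.2.2
    have habs : |(0:ℝ) - xpos f fl r.1 t| = xpos f fl r.1 t := by
      rw [zero_sub, abs_neg, abs_of_nonneg hx0]
    by_cases hrt' : (r : ℝ) = t
    · have hItt : infIcc f (r : ℝ) t = f t := by
        rw [hrt', infIcc, Set.Icc_self, Set.image_singleton, csInf_singleton]
      have : jump f fl r.1 - |(0:ℝ) - xpos f fl r.1 t| = 0 := by
        rw [habs, jump, xpos, hItt, hrt']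
        ring
      simp only [hg, if_pos hrt']
      calc cycleDist (jump f fl r.1) 0 (xpos f fl r.1 t)
          ≤ jump f fl r.1 - |(0:ℝ) - xpos f fl r.1 t| := min_le_right _ _
        _ = 0 := this
    · simp only [hg, if_neg hrt']
      calc cycleDist (jump f fl r.1) 0 (xpos f fl r.1 t)
          ≤ |(0:ℝ) - xpos f fl r.1 t| := min_le_left _ _
        _ = xpos f fl r.1 t := habs
        _ = infIcc f (r : ℝ) t - fl r := rfl
  have hfin : ∀ F : Finset {r : ℝ // Prec f fl s r ∧ s ≠ r ∧ Prec f fl r t},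
      ∑ r ∈ F, g r ≤ fl t - infIcc f s t := by
    intro F
    have hsumeq : ∑ r ∈ F, g r
        = ∑ r ∈ Finset.filter (fun r => ¬ (r.1 = t)) F, (infIcc f (r : ℝ) t - fl r) := by
      rw [Finset.sum_filter]
      refine Finset.sum_congr rfl (fun r _ => ?_)
      simp only [hg]
      by_cases h : (r : ℝ) = t <;> simp [h]
    rw [hsumeq]
    set F' := Finset.filter (fun r => ¬ (r.1 = t)) F with hF'
    rcases F'.eq_empty_or_nonempty with he | hne'
    · rw [he, Finset.sum_empty]; linarith
    · have h1 := sum_xpos_le hf_left hf_nonneg hs0 ht1 F' hne'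
      set m := F'.max' hne' with hm
      have hmF' : m ∈ F' := F'.max'_mem hne'
      have hmlt : (m : ℝ) < t :=
        lt_of_le_of_ne m.2.2.2.1 ((Finset.mem_filter.mp hmF').2)
      have h0m : 0 ≤ (m : ℝ) := hs0.trans m.2.1.1
      have h2 : infIcc f (m : ℝ) t ≤ fl t :=
        infIcc_le_fl hf_left hf_nonneg h0m hmlt le_rfl ht1
      linarith
  by_cases hsum : Summable (fun r : {r : ℝ // Prec f fl s r ∧ s ≠ r ∧ Prec f fl r t} =>
      cycleDist (jump f fl r.1) 0 (xpos f fl r.1 t))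
  · exact Summable.tsum_le_of_sum_le hsum (fun F =>
      le_trans (Finset.sum_le_sum (fun r _ => hterm r)) (hfin F))
  · rw [dZero, tsum_eq_zero_of_not_summable hsum]
    linarith
end

section
/- Fix α ∈ (1,2). The series f_α(β) = ∑_{n=0}^∞ (−1)^n β^n / ((n − α)·n!) converges for every β ≥ 0 and defines a continuous, strictly increasing function on [0,∞), with f_α(0) = −1/α < 0 and f_α(1) > 0. Consequently, the equation ∑_{n=0}^∞ (−1)^n β^n / ((n − α)·n!) = 0 has a unique solution β_α in (0,∞), and moreover β_α ∈ (0,1). -/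
/-!
Since `(n - α)⁻¹` is bounded in `n`, the series is dominated by `M |β|ⁿ / n!`, which gives
summability and continuity. Splitting off the terms `n = 0, 1` and writing
`(n - α)⁻¹ = ∫₀¹ t^(n - α - 1) dt` for `n ≥ 2` (this needs `α < 2`), summation under the
integral yields
`f_α(β) = -1/α + β/(α - 1) + ∫₀¹ t^(-α-1) (e^(-βt) - 1 + βt) dt`.
The integral is nondecreasing in `β ≥ 0` because `x ↦ e^(-x) + x` is, and `β/(α - 1)` is strictly
increasing because `α > 1`; at `β = 1` the integral is nonnegative, so `f_α(1) ≥ 1/(α-1) - 1/α > 0`.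
-/

/-- The series `f_α(β) = ∑_{n=0}^∞ (−1)^n β^n / ((n − α)·n!)`. -/
noncomputable def stableSeries (α β : ℝ) : ℝ :=
  ∑' n : ℕ, (-1 : ℝ) ^ n * β ^ n / (((n : ℝ) - α) * (n.factorial : ℝ))

open Real Set MeasureTheory Filter Topology

lemma exp_neg_sub_one_add_nonneg (x : ℝ) : 0 ≤ exp (-x) - 1 + x := by
  linarith [add_one_le_exp (-x)]

lemma exp_neg_sub_one_add_le_sq {x : ℝ} (hx : 0 ≤ x) : exp (-x) - 1 + x ≤ x ^ 2 := by
  have h : exp (-x) * (1 + x) ≤ 1 := by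
    rw [exp_neg, inv_mul_le_iff₀ (exp_pos x)]
    linarith [add_one_le_exp x]
  nlinarith [exp_pos (-x)]

lemma monotoneOn_exp_neg_add : MonotoneOn (fun x => exp (-x) + x) (Ici 0) := by
  intro a ha b _ hab
  have h : exp (-a) * (1 + (a - b)) ≤ exp (-b) := by
    rw [show -b = -a + (a - b) by ring, exp_add]
    gcongr
    linarith [add_one_le_exp (a - b)]
  have : exp (-a) ≤ 1 := exp_le_one_iff.2 (neg_nonpos.2 ha)
  dsimp only
  nlinarith

-- If `n = α`, the junk value `(n - α)⁻¹ = 0` makes the `n`-th term vanish.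
lemma exists_abs_inv_natCast_sub_le (α : ℝ) : ∃ M, ∀ n : ℕ, |((n : ℝ) - α)⁻¹| ≤ M := by
  have h : Tendsto (fun n : ℕ => |((n : ℝ) - α)⁻¹|) atTop (𝓝 0) := by
    simpa [sub_eq_add_neg] using (tendsto_inv_atTop_zero.comp
      (tendsto_atTop_add_const_right _ (-α) tendsto_natCast_atTop_atTop)).abs
  obtain ⟨M, hM⟩ := h.bddAbove_range
  exact ⟨M, fun n => hM ⟨n, rfl⟩⟩

lemma norm_stableTerm_le {α M : ℝ} (hM : ∀ n : ℕ, |((n : ℝ) - α)⁻¹| ≤ M) (β : ℝ) (n : ℕ) :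
    ‖(-1 : ℝ) ^ n * β ^ n / (((n : ℝ) - α) * (n.factorial : ℝ))‖ ≤
      M * (|β| ^ n / n.factorial) := by
  rw [norm_div, norm_mul, norm_mul, norm_pow, norm_pow, norm_neg, norm_one, one_pow, one_mul,
    Real.norm_eq_abs, Real.norm_eq_abs, Real.norm_eq_abs, Nat.abs_cast, ← div_div,
    div_eq_mul_inv _ |_|, ← abs_inv, mul_comm, mul_div_assoc]
  exact mul_le_mul_of_nonneg_right (hM n) (by positivity)

lemma summable_stableTerm (α β : ℝ) :
    Summable (fun n : ℕ => (-1 : ℝ) ^ n * β ^ n / (((n : ℝ) - α) * (n.factorial : ℝ))) := by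
  obtain ⟨M, hM⟩ := exists_abs_inv_natCast_sub_le α
  exact .of_norm_bounded ((summable_pow_div_factorial |β|).mul_left M) (norm_stableTerm_le hM β)

lemma continuous_stableSeries (α : ℝ) : Continuous (stableSeries α) := by
  obtain ⟨M, hM⟩ := exists_abs_inv_natCast_sub_le α
  refine continuous_iff_continuousAt.2 fun x => ContinuousOn.continuousAt ?_
    (Metric.closedBall_mem_nhds x one_pos)
  refine continuousOn_tsum (fun n => by fun_prop)
    ((summable_pow_div_factorial (|x| + 1)).mul_left M) fun n β hβ => ?_
  refine (norm_stableTerm_le hM β n).trans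
    (mul_le_mul_of_nonneg_left ?_ ((abs_nonneg _).trans (hM 0)))
  have : |β| ≤ |x| + 1 := by
    have := abs_sub_abs_le_abs_sub β x
    rw [Metric.mem_closedBall, Real.dist_eq] at hβ
    linarith
  gcongr

lemma stableSeries_zero (α : ℝ) : stableSeries α 0 = -(1 / α) := by
  rw [stableSeries, tsum_eq_single 0 fun n hn => by simp [hn]]
  simp

lemma stableSeries_eq_add_tsum (α β : ℝ) :
    stableSeries α β = -(1 / α) + β / (α - 1) +
      ∑' m : ℕ, (-β) ^ (m + 2) / (m + 2).factorial * ((m : ℝ) + 2 - α)⁻¹ := by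
  rw [stableSeries, ← (summable_stableTerm α β).sum_add_tsum_nat_add 2]
  simp only [Finset.sum_range_succ, Finset.sum_range_zero]
  congr 1
  · rw [← neg_sub α (1 : ℕ)]
    simp only [Nat.cast_zero, Nat.cast_one, Nat.factorial_zero, Nat.factorial_one, pow_zero,
      pow_one, mul_one, zero_sub, div_neg]
    ring
  · refine tsum_congr fun m => ?_
    rw [neg_pow, mul_comm (((m + 2 : ℕ) : ℝ) - α), ← div_div, div_eq_mul_inv _ (_ - α)]
    push_cast
    ring

noncomputable def stableIntegrand (α β t : ℝ) : ℝ := t ^ (-α - 1) * (exp (-(β * t)) - 1 + β * t)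

lemma integral_rpow_Ioc_zero_one {r : ℝ} (hr : -1 < r) :
    ∫ t in Ioc (0 : ℝ) 1, t ^ r = (r + 1)⁻¹ := by
  rw [← intervalIntegral.integral_of_le zero_le_one, integral_rpow (.inl hr), one_rpow,
    zero_rpow (by linarith), sub_zero, one_div]

lemma hasSum_pow_div_factorial_add_two (x : ℝ) :
    HasSum (fun m : ℕ => x ^ (m + 2) / (m + 2).factorial) (exp x - 1 - x) := by
  have h := NormedSpace.expSeries_div_hasSum_exp x
  rw [← exp_eq_exp_ℝ, ← hasSum_nat_add_iff' 2] at h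
  simpa [Finset.sum_range_succ, sub_sub] using h

lemma hasSum_stableIntegrand (α β : ℝ) {t : ℝ} (ht : 0 < t) :
    HasSum (fun m : ℕ => (-β) ^ (m + 2) / (m + 2).factorial * t ^ ((m : ℝ) + 1 - α))
      (stableIntegrand α β t) := by
  have h := (hasSum_pow_div_factorial_add_two (-(β * t))).mul_left (t ^ (-α - 1))
  rw [sub_neg_eq_add] at h
  refine h.congr_fun fun m => ?_
  rw [show (m : ℝ) + 1 - α = -α - 1 + ((m + 2 : ℕ) : ℝ) by push_cast; ring, rpow_add ht,
    rpow_natCast, neg_mul_eq_neg_mul, mul_pow]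
  ring

lemma integral_stableIntegrand {α : ℝ} (hα : α < 2) (β : ℝ) :
    ∫ t in Ioc (0 : ℝ) 1, stableIntegrand α β t =
      ∑' m : ℕ, (-β) ^ (m + 2) / (m + 2).factorial * ((m : ℝ) + 2 - α)⁻¹ := by
  set c : ℕ → ℝ := fun m => (-β) ^ (m + 2) / (m + 2).factorial
  have hexp (m : ℕ) : -1 < (m : ℝ) + 1 - α := by linarith [m.cast_nonneg (α := ℝ)]
  have hint (m : ℕ) : ∫ t in Ioc (0 : ℝ) 1, t ^ ((m : ℝ) + 1 - α) = ((m : ℝ) + 2 - α)⁻¹ := by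
    rw [integral_rpow_Ioc_zero_one (hexp m)]
    ring_nf
  have hnorm (m : ℕ) : ∫ t in Ioc (0 : ℝ) 1, ‖c m * t ^ ((m : ℝ) + 1 - α)‖ =
      |c m| * ((m : ℝ) + 2 - α)⁻¹ := by
    rw [← hint, ← integral_const_mul]
    refine setIntegral_congr_fun measurableSet_Ioc fun t ht => ?_
    rw [norm_mul, norm_eq_abs, norm_of_nonneg (rpow_nonneg ht.1.le _)]
  have hsum : Summable fun m => ∫ t in Ioc (0 : ℝ) 1, ‖c m * t ^ ((m : ℝ) + 1 - α)‖ := by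
    refine .of_nonneg_of_le (fun m => integral_nonneg fun t => norm_nonneg _) (fun m => ?_)
      (((summable_nat_add_iff 2).2 (summable_pow_div_factorial |β|)).mul_left (2 - α)⁻¹)
    rw [hnorm, mul_comm]
    have : |c m| = |β| ^ (m + 2) / (m + 2).factorial := by simp [c, abs_div]
    rw [this]
    gcongr
    linarith [m.cast_nonneg (α := ℝ)]
  rw [setIntegral_congr_fun measurableSet_Ioc fun t ht =>
      (hasSum_stableIntegrand α β ht.1).tsum_eq.symm,
    ← integral_tsum_of_summable_integral_norm
      (fun m => ((intervalIntegral.intervalIntegrable_rpow' (hexp m)).1).const_mul (c m)) hsum]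
  simp only [integral_const_mul, hint, c]

lemma stableSeries_eq_add_integral {α : ℝ} (hα : α < 2) (β : ℝ) :
    stableSeries α β = -(1 / α) + β / (α - 1) + ∫ t in Ioc (0 : ℝ) 1, stableIntegrand α β t := by
  rw [stableSeries_eq_add_tsum, integral_stableIntegrand hα]

lemma stableIntegrand_nonneg (α β : ℝ) {t : ℝ} (ht : 0 ≤ t) : 0 ≤ stableIntegrand α β t :=
  mul_nonneg (rpow_nonneg ht _) (exp_neg_sub_one_add_nonneg _)

lemma stableIntegrand_le_stableIntegrand (α : ℝ) {β β' t : ℝ} (hβ : 0 ≤ β) (hββ' : β ≤ β')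
    (ht : 0 ≤ t) : stableIntegrand α β t ≤ stableIntegrand α β' t := by
  have hβt : 0 ≤ β * t := mul_nonneg hβ ht
  have hexp : exp (-(β * t)) + β * t ≤ exp (-(β' * t)) + β' * t :=
    monotoneOn_exp_neg_add hβt (hβt.trans (by gcongr)) (mul_le_mul_of_nonneg_right hββ' ht)
  unfold stableIntegrand
  gcongr ?_ * ?_
  linarith

lemma integrableOn_stableIntegrand {α β : ℝ} (hα : α < 2) (hβ : 0 ≤ β) :
    IntegrableOn (stableIntegrand α β) (Ioc 0 1) := by
  refine Integrable.mono' (((intervalIntegral.intervalIntegrable_rpow' (r := 1 - α)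
    (by linarith)).1).const_mul (β ^ 2)) ?_ ((ae_restrict_iff' measurableSet_Ioc).2
      (.of_forall fun t ht => ?_))
  · exact (ContinuousOn.mul (continuousOn_id.rpow_const fun t ht => .inl ht.1.ne')
      (by fun_prop)).aestronglyMeasurable measurableSet_Ioc
  · rw [norm_of_nonneg (stableIntegrand_nonneg α β ht.1.le), stableIntegrand,
      show 1 - α = -α - 1 + (2 : ℕ) by push_cast; ring, rpow_add ht.1, rpow_natCast]
    calc _ ≤ t ^ (-α - 1) * (β * t) ^ 2 := mul_le_mul_of_nonneg_left
          (exp_neg_sub_one_add_le_sq (mul_nonneg hβ ht.1.le)) (rpow_nonneg ht.1.le _)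
      _ = _ := by ring

theorem strictMonoOn_stableSeries {α : ℝ} (hα₁ : 1 < α) (hα₂ : α < 2) :
    StrictMonoOn (stableSeries α) (Ici 0) := by
  intro β hβ β' hβ' hlt
  rw [stableSeries_eq_add_integral hα₂, stableSeries_eq_add_integral hα₂]
  have hlin : β / (α - 1) < β' / (α - 1) := div_lt_div_of_pos_right hlt (by linarith)
  have hint : ∫ t in Ioc (0 : ℝ) 1, stableIntegrand α β t ≤
      ∫ t in Ioc (0 : ℝ) 1, stableIntegrand α β' t :=
    setIntegral_mono_on (integrableOn_stableIntegrand hα₂ hβ)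
      (integrableOn_stableIntegrand hα₂ hβ') measurableSet_Ioc fun t ht =>
        stableIntegrand_le_stableIntegrand α hβ hlt.le ht.1.le
  linarith

lemma stableSeries_one_pos {α : ℝ} (hα₁ : 1 < α) (hα₂ : α < 2) : 0 < stableSeries α 1 := by
  rw [stableSeries_eq_add_integral hα₂]
  have hint : 0 ≤ ∫ t in Ioc (0 : ℝ) 1, stableIntegrand α 1 t :=
    setIntegral_nonneg measurableSet_Ioc fun t ht => stableIntegrand_nonneg α 1 ht.1.le
  have : 1 / α < 1 / (α - 1) := one_div_lt_one_div_of_lt (by linarith) (by linarith)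
  linarith

/-- for α ∈ (1,2), the series f_α(β) converges for every β ≥ 0 and
defines a continuous, strictly increasing function on [0,∞) with f_α(0) = -1/α < 0
and f_α(1) > 0; consequently the equation f_α(β) = 0 has a unique solution β_α in
(0,∞), and moreover β_α ∈ (0,1). -/
theorem stableSeries_root (α : ℝ) (hα : α ∈ Set.Ioo (1:ℝ) 2) :
    (∀ β : ℝ, 0 ≤ β →
      Summable (fun n : ℕ => (-1 : ℝ) ^ n * β ^ n / (((n : ℝ) - α) * (n.factorial : ℝ)))) ∧
    ContinuousOn (stableSeries α) (Set.Ici 0) ∧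
    StrictMonoOn (stableSeries α) (Set.Ici 0) ∧
    stableSeries α 0 = -(1 / α) ∧
    stableSeries α 0 < 0 ∧
    0 < stableSeries α 1 ∧
    (∃! β : ℝ, 0 < β ∧ stableSeries α β = 0) ∧
    (∀ β : ℝ, 0 < β → stableSeries α β = 0 → β ∈ Set.Ioo (0:ℝ) 1) := by
  obtain ⟨hα₁, hα₂⟩ := hα
  have hmono := strictMonoOn_stableSeries hα₁ hα₂
  have hzero : stableSeries α 0 < 0 := by
    rw [stableSeries_zero, neg_neg_iff_pos]
    exact one_div_pos.2 (by linarith)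
  have hone := stableSeries_one_pos hα₁ hα₂
  have hlt_one (β : ℝ) (hβ : 0 < β) (hroot : stableSeries α β = 0) : β < 1 :=
    (hmono.lt_iff_lt hβ.le (mem_Ici.2 zero_le_one)).1 (hroot ▸ hone)
  obtain ⟨β₀, hβ₀, hroot⟩ := intermediate_value_Ioo zero_le_one
    (continuous_stableSeries α).continuousOn ⟨hzero, hone⟩
  refine ⟨fun β _ => summable_stableTerm α β, (continuous_stableSeries α).continuousOn, hmono,
    stableSeries_zero α, hzero, hone, ⟨β₀, ⟨hβ₀.1, hroot⟩, fun β hβ => ?_⟩,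
    fun β hβ hroot => ⟨hβ, hlt_one β hβ hroot⟩⟩
  exact hmono.injOn hβ.1.le hβ₀.1.le (hβ.2.trans hroot.symm)
end
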